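/- arXiv:1801.02602 — 3 statements merged into one kernel-verified Lean document; each statement's English description precedes it below -/
import Mathlib

section
/- Let f : ℕ × ℕ → ℝ be nonnegative and satisfy f(d,n) ≤ 2·f(d, ⌊n/2⌋) + f(d-1, n-1) for all d ≥ 1, n ≥ 2, with f(d,1) ≤ 1 and f(0,n) ≤ 1. Then f(d,n) ≤ n · (d + ⌈log₂ n⌉ choose d) for all d, n ≥ 1. -/
/-- Kalai–Kleitman recurrence bound: a nonnegative `f` satisfying
`f(d,n) ≤ 2 f(d, ⌊n/2⌋) + f(d-1, n-1)` with boundary conditions is bounded by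
`n * choose (d + ⌈log₂ n⌉) d`. -/
theorem stmt_0 (f : ℕ → ℕ → ℝ)
    (hnonneg : ∀ d n, 0 ≤ f d n)
    (hrec : ∀ d n, 1 ≤ d → 2 ≤ n → f d n ≤ 2 * f d (n / 2) + f (d - 1) (n - 1))
    (hb1 : ∀ d, f d 1 ≤ 1)
    (hb0 : ∀ n, f 0 n ≤ 1) :
    ∀ d n, 1 ≤ d → 1 ≤ n →
      f d n ≤ (n : ℝ) * (Nat.choose (d + Nat.clog 2 n) d : ℝ) := by
  intro d n
  induction n using Nat.strong_induction_on generalizing d with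
  | _ n ih =>
  intro hd hn
  rcases eq_or_lt_of_le hn with h1 | hn2
  · rw [← h1]
    simpa using hb1 d
  · have hn2 : 2 ≤ n := hn2
    obtain ⟨k, hk⟩ : ∃ k, Nat.clog 2 n = k + 1 :=
      ⟨Nat.clog 2 n - 1, (Nat.succ_pred_eq_of_pos (Nat.clog_pos one_lt_two hn2)).symm⟩
    have hhalf_lt : n / 2 < n := Nat.div_lt_self (by omega) one_lt_two
    have hhalf1 : 1 ≤ n / 2 := (Nat.one_le_div_iff (by norm_num)).2 hn2
    have hclog_half : Nat.clog 2 (n / 2) ≤ k := by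
      have h1 := Nat.clog_of_two_le (b := 2) one_lt_two hn2
      have h2 := Nat.clog_mono_right 2 (Nat.div_le_div_right (c := 2) (show n ≤ n + 2 - 1 by omega))
      omega
    have hclog_sub : Nat.clog 2 (n - 1) ≤ k + 1 := by
      rw [← hk]; exact Nat.clog_mono_right 2 (by omega)
    -- bound on f d (n/2)
    have hA : f d (n / 2) ≤ ((n / 2 : ℕ) : ℝ) * (Nat.choose (d - 1 + (k + 1)) d : ℝ) := by
      refine (ih _ hhalf_lt d hd hhalf1).trans ?_
      have hmono : Nat.choose (d + Nat.clog 2 (n / 2)) d ≤ Nat.choose (d - 1 + (k + 1)) d :=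
        Nat.choose_le_choose d (by omega)
      have : ((n / 2 : ℕ) : ℝ) ≥ 0 := by positivity
      exact mul_le_mul_of_nonneg_left (by exact_mod_cast hmono) this
    -- bound on f (d-1) (n-1)
    have hB : f (d - 1) (n - 1) ≤ ((n - 1 : ℕ) : ℝ) * (Nat.choose (d - 1 + (k + 1)) (d - 1) : ℝ) := by
      rcases Nat.lt_or_ge d 2 with hd1 | hd2
      · have hd1 : d = 1 := by omega
        subst hd1
        simp only [Nat.sub_self, Nat.choose_zero_right, Nat.cast_one, mul_one]
        calc f 0 (n - 1) ≤ 1 := hb0 _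
          _ ≤ ((n - 1 : ℕ) : ℝ) := by
              have h1 : 1 ≤ n - 1 := by omega
              exact_mod_cast h1
      · refine (ih (n - 1) (by omega) (d - 1) (by omega) (by omega)).trans ?_
        have hmono : Nat.choose (d - 1 + Nat.clog 2 (n - 1)) (d - 1)
            ≤ Nat.choose (d - 1 + (k + 1)) (d - 1) :=
          Nat.choose_le_choose (d - 1) (by omega)
        exact mul_le_mul_of_nonneg_left (by exact_mod_cast hmono) (by positivity)
    have hchain := (hrec d n hd hn2).trans (by linarith : 2 * f d (n / 2) + f (d - 1) (n - 1)
      ≤ 2 * (((n / 2 : ℕ) : ℝ) * (Nat.choose (d - 1 + (k + 1)) d : ℝ))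
        + ((n - 1 : ℕ) : ℝ) * (Nat.choose (d - 1 + (k + 1)) (d - 1) : ℝ))
    refine hchain.trans ?_
    -- Pascal and arithmetic
    have hpascal : Nat.choose (d + (k + 1)) d
        = Nat.choose (d - 1 + (k + 1)) (d - 1) + Nat.choose (d - 1 + (k + 1)) d := by
      obtain ⟨d', rfl⟩ : ∃ d', d = d' + 1 := ⟨d - 1, by omega⟩
      have : d' + 1 + (k + 1) = (d' + (k + 1)) + 1 := by ring
      rw [this, Nat.choose_succ_succ]
      simp
    rw [hk, hpascal]
    have h2half : 2 * ((n / 2 : ℕ) : ℝ) ≤ (n : ℝ) := by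
      have h1 : 2 * (n / 2) ≤ n := by omega
      exact_mod_cast h1
    have hsub : ((n - 1 : ℕ) : ℝ) ≤ (n : ℝ) := by exact_mod_cast Nat.sub_le n 1
    push_cast
    have c1 : (0 : ℝ) ≤ (Nat.choose (d - 1 + (k + 1)) d : ℝ) := by positivity
    have c2 : (0 : ℝ) ≤ (Nat.choose (d - 1 + (k + 1)) (d - 1) : ℝ) := by positivity
    nlinarith [mul_le_mul_of_nonneg_right h2half c1, mul_le_mul_of_nonneg_right hsub c2]
end

section
/- The solution of the recurrence b₁ = 1, b_{n+1} = b_n + (b₁ + b₂ + ⋯ + b_n)/n satisfies b_n = e^{Θ(√n)}; that is, there exist constants c₁, c₂ > 0 such that e^{c₁√n} ≤ b_n ≤ e^{c₂√n} for all sufficiently large n. -/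
open Finset Real

/-!
With `a n = (b 1 + ⋯ + b n) / n` the pair `(b, a)` solves the linear system
`b (n+1) = b n + a n`, `a (n+1) = a n + b n / (n+1)`, whose coefficients are nonnegative; hence a
pair satisfying it with `≤` (resp. `≥`) that starts below (resp. above) `(b, a)` stays there.
Put `x = √n`, `y = √(n+1)`, so that `y - x = 1/(x+y)` is about `1/(2x)`. Then
`(e^{c(√n-1)}, e^{c(√n-1)}/√n)` is such a subsolution for `c = 1`, by `e^t ≤ 1/(1-t)`, and a
supersolution for `c = 3`, by `1 + t ≤ e^t`; both equal `(b 1, a 1) = (1, 1)` at `n = 1`.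
-/

def IsSupersolution (N : ℕ) (u v : ℕ → ℝ) : Prop :=
  ∀ n ≥ N, u n + v n ≤ u (n + 1) ∧ v n + u n / (n + 1) ≤ v (n + 1)

def IsSubsolution (N : ℕ) (u v : ℕ → ℝ) : Prop :=
  ∀ n ≥ N, u (n + 1) ≤ u n + v n ∧ v (n + 1) ≤ v n + u n / (n + 1)

theorem IsSupersolution.nonneg {N : ℕ} {u v : ℕ → ℝ} (h : IsSupersolution N u v)
    (hu : 0 ≤ u N) (hv : 0 ≤ v N) : ∀ n ≥ N, 0 ≤ u n ∧ 0 ≤ v n := by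
  intro n hn
  induction n, hn using Nat.le_induction with
  | base => exact ⟨hu, hv⟩
  | succ n hn ih =>
    obtain ⟨hun, hvn⟩ := ih
    obtain ⟨hu', hv'⟩ := h n hn
    have : 0 ≤ u n / (n + 1) := by positivity
    exact ⟨by linarith, by linarith⟩

theorem IsSupersolution.sub {N : ℕ} {u v b a : ℕ → ℝ} (hS : IsSupersolution N u v)
    (hs : IsSubsolution N b a) : IsSupersolution N (u - b) (v - a) := by
  intro n hn
  obtain ⟨hu, hv⟩ := hS n hn
  obtain ⟨hb, ha⟩ := hs n hn
  simp only [Pi.sub_apply, sub_div]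
  constructor <;> linarith

theorem le_of_isSubsolution_of_isSupersolution {N : ℕ} {b a u v : ℕ → ℝ}
    (hs : IsSubsolution N b a) (hS : IsSupersolution N u v) (hb : b N ≤ u N) (ha : a N ≤ v N) :
    ∀ n ≥ N, b n ≤ u n ∧ a n ≤ v n := fun n hn =>
  have h := (hS.sub hs).nonneg (sub_nonneg.2 hb) (sub_nonneg.2 ha) n hn
  ⟨sub_nonneg.1 h.1, sub_nonneg.1 h.2⟩

section SqrtStep

variable {x y : ℝ} (hx : 1 ≤ x) (hy : 0 ≤ y) (hxy : y ^ 2 = x ^ 2 + 1)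
include hx hy hxy

theorem one_add_inv_le_exp_three_mul_sub : 1 + x⁻¹ ≤ exp (3 * (y - x)) := by
  have hyx : y ≤ 2 * x := by nlinarith
  have h : x⁻¹ ≤ 3 * (y - x) := by
    rw [inv_le_iff_one_le_mul₀ (by positivity)]
    nlinarith
  linarith [add_one_le_exp (3 * (y - x))]

theorem inv_add_inv_sq_le_exp_three_mul_sub_div :
    x⁻¹ + (y ^ 2)⁻¹ ≤ exp (3 * (y - x)) / y := by
  have hy1 : 1 ≤ y := by nlinarith
  have hxy' : x ≤ y := by nlinarith
  have h : x⁻¹ + (y ^ 2)⁻¹ ≤ (1 + 3 * (y - x)) / y := by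
    rw [inv_add_inv (by positivity) (by positivity),
      div_le_div_iff₀ (by positivity) (by positivity)]
    have hD : (1 + 3 * (y - x)) * x * y - x - y ^ 2 = (y - x) * (y * (x - 1) + x * (y - x)) := by
      linear_combination x * hxy
    have : 0 ≤ (y - x) * (y * (x - 1) + x * (y - x)) := by
      have := sub_nonneg.2 hx
      have := sub_nonneg.2 hxy'
      positivity
    nlinarith
  calc x⁻¹ + (y ^ 2)⁻¹ ≤ (1 + 3 * (y - x)) / y := h
    _ ≤ exp (3 * (y - x)) / y := by gcongr; linarith [add_one_le_exp (3 * (y - x))]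

theorem exp_sub_le_one_add_inv : exp (y - x) ≤ 1 + x⁻¹ := by
  have hy1 : 1 ≤ y := by nlinarith
  have hxy' : x ≤ y := by nlinarith
  have ht : (y - x) * (x + y) = 1 := by linear_combination hxy
  have ht1 : y - x < 1 := by nlinarith
  calc exp (y - x) ≤ 1 / (1 - (y - x)) := exp_bound_div_one_sub_of_interval (by linarith) ht1
    _ ≤ (x + 1) / x := by
      rw [div_le_div_iff₀ (by linarith) (by positivity)]
      nlinarith [mul_nonneg (sub_nonneg.2 hxy') (sub_nonneg.2 hy1)]
    _ = 1 + x⁻¹ := by field_simp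

theorem exp_sub_div_le_inv_add_inv_sq : exp (y - x) / y ≤ x⁻¹ + (y ^ 2)⁻¹ := by
  have hy1 : 1 ≤ y := by nlinarith
  have hxy' : x ≤ y := by nlinarith
  have ht : (y - x) * (x + y) = 1 := by linear_combination hxy
  have ht1 : y - x < 1 := by nlinarith
  calc exp (y - x) / y ≤ 1 / (1 - (y - x)) / y := by
        gcongr; exact exp_bound_div_one_sub_of_interval (by linarith) ht1
    _ ≤ x⁻¹ + (y ^ 2)⁻¹ := by
      rw [inv_add_inv (by positivity) (by positivity), div_div,
        div_le_div_iff₀ (by nlinarith) (by positivity)]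
      have hD : (x + y ^ 2) * (1 - (y - x)) - x * y = (y - x) * (x + 1) * (y - 1) := by
        linear_combination (-y) * hxy
      have : 0 ≤ (y - x) * (x + 1) * (y - 1) := by
        have := sub_nonneg.2 hy1
        have := sub_nonneg.2 hxy'
        positivity
      nlinarith

end SqrtStep

theorem sqrt_succ_sq (n : ℕ) : √((n + 1 : ℕ) : ℝ) ^ 2 = √(n : ℝ) ^ 2 + 1 := by
  push_cast
  rw [sq_sqrt (by positivity), sq_sqrt (by positivity)]

theorem isSupersolution_exp_three_mul_sqrt :
    IsSupersolution 1 (fun n => exp (3 * (√n - 1))) (fun n => exp (3 * (√n - 1)) / √n) := by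
  intro n hn
  set x := √(n : ℝ)
  set y := √((n + 1 : ℕ) : ℝ)
  have hx : 1 ≤ x := one_le_sqrt.2 (by exact_mod_cast hn)
  have hxy : y ^ 2 = x ^ 2 + 1 := sqrt_succ_sq n
  have hy : exp (3 * (y - 1)) = exp (3 * (x - 1)) * exp (3 * (y - x)) := by
    rw [← exp_add]; ring_nf
  have hn1 : (n : ℝ) + 1 = y ^ 2 := by rw [hxy, sq_sqrt (by positivity)]
  dsimp only
  rw [hy, hn1]
  constructor
  · calc _ = exp (3 * (x - 1)) * (1 + x⁻¹) := by ring
      _ ≤ _ := by gcongr; exact one_add_inv_le_exp_three_mul_sub hx (sqrt_nonneg _) hxy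
  · calc _ = exp (3 * (x - 1)) * (x⁻¹ + (y ^ 2)⁻¹) := by ring
      _ ≤ exp (3 * (x - 1)) * (exp (3 * (y - x)) / y) := by
        gcongr; exact inv_add_inv_sq_le_exp_three_mul_sub_div hx (sqrt_nonneg _) hxy
      _ = _ := by ring

theorem isSubsolution_exp_sqrt :
    IsSubsolution 1 (fun n => exp (√n - 1)) (fun n => exp (√n - 1) / √n) := by
  intro n hn
  set x := √(n : ℝ)
  set y := √((n + 1 : ℕ) : ℝ)
  have hx : 1 ≤ x := one_le_sqrt.2 (by exact_mod_cast hn)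
  have hxy : y ^ 2 = x ^ 2 + 1 := sqrt_succ_sq n
  have hy : exp (y - 1) = exp (x - 1) * exp (y - x) := by rw [← exp_add]; ring_nf
  have hn1 : (n : ℝ) + 1 = y ^ 2 := by rw [hxy, sq_sqrt (by positivity)]
  dsimp only
  rw [hy, hn1]
  constructor
  · calc exp (x - 1) * exp (y - x) ≤ exp (x - 1) * (1 + x⁻¹) :=
          mul_le_mul_of_nonneg_left (exp_sub_le_one_add_inv hx (sqrt_nonneg _) hxy) (exp_pos _).le
      _ = _ := by ring
  · calc _ = exp (x - 1) * (exp (y - x) / y) := by ring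
      _ ≤ exp (x - 1) * (x⁻¹ + (y ^ 2)⁻¹) := by
        gcongr; exact exp_sub_div_le_inv_add_inv_sq hx (sqrt_nonneg _) hxy
      _ = _ := by ring

noncomputable def partialAverage (b : ℕ → ℝ) (n : ℕ) : ℝ := (∑ i ∈ Icc 1 n, b i) / n

theorem partialAverage_succ {b : ℕ → ℝ} {n : ℕ} (hn : n ≠ 0)
    (hb : b (n + 1) = b n + partialAverage b n) :
    partialAverage b (n + 1) = partialAverage b n + b n / (n + 1) := by
  have : (n : ℝ) ≠ 0 := by exact_mod_cast hn
  simp only [partialAverage] at hb ⊢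
  rw [sum_Icc_succ_top (by omega), hb]
  push_cast
  field_simp
  ring

/-- The recurrence `b₁ = 1`, `b_{n+1} = b_n + (b₁ + ⋯ + b_n)/n` has solution
`b_n = e^{Θ(√n)}`. -/
theorem stmt_1 (b : ℕ → ℝ) (hb1 : b 1 = 1)
    (hrec : ∀ n : ℕ, 1 ≤ n → b (n + 1) = b n + (∑ i ∈ Finset.Icc 1 n, b i) / n) :
    ∃ c₁ c₂ : ℝ, 0 < c₁ ∧ 0 < c₂ ∧ ∃ N : ℕ, ∀ n : ℕ, N ≤ n →
      Real.exp (c₁ * Real.sqrt n) ≤ b n ∧ b n ≤ Real.exp (c₂ * Real.sqrt n) := by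
  set a := partialAverage b
  have hstep (n : ℕ) (hn : n ≥ 1) : b (n + 1) = b n + a n ∧ a (n + 1) = a n + b n / (n + 1) :=
    ⟨hrec n hn, partialAverage_succ (by omega) (hrec n hn)⟩
  have ha1 : a 1 = 1 := by simp [a, partialAverage, hb1]
  have lower := le_of_isSubsolution_of_isSupersolution isSubsolution_exp_sqrt
    (fun n hn => ⟨(hstep n hn).1.ge, (hstep n hn).2.ge⟩) (by simp [hb1]) (by simp [ha1])
  have upper := le_of_isSubsolution_of_isSupersolution
    (fun n hn => ⟨(hstep n hn).1.le, (hstep n hn).2.le⟩) isSupersolution_exp_three_mul_sqrt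
    (by simp [hb1]) (by simp [ha1])
  refine ⟨1 / 2, 3, by norm_num, by norm_num, 4, fun n hn => ⟨?_, ?_⟩⟩
  · have h2 : 2 ≤ √(n : ℝ) :=
      (le_sqrt (by norm_num) (by positivity)).2 (by norm_num; exact_mod_cast hn)
    calc exp (1 / 2 * √(n : ℝ)) ≤ exp (√(n : ℝ) - 1) := exp_le_exp.2 (by linarith)
      _ ≤ b n := (lower n (by omega)).1
  · calc b n ≤ exp (3 * (√(n : ℝ) - 1)) := (upper n (by omega)).1
      _ ≤ exp (3 * √(n : ℝ)) := exp_le_exp.2 (by linarith)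
end

section
/- (Arrow's theorem, three alternatives) Let n ≥ 1 and consider a social welfare function on n voters and 3 alternatives: a map from n-tuples of linear orders on {a,b,c} to complete antisymmetric binary relations on {a,b,c}, satisfying (1) unanimity (if all voters prefer x to y then society prefers x to y) and (2) independence of irrelevant alternatives (society's preference between x and y depends only on individual preferences between x and y). If the output relation is always acyclic (a linear order), then the function is a dictatorship: there is a voter whose preference order is always the output. -/
def IsPref (r : Fin 3 → Fin 3 → Prop) : Prop :=
  (∀ x y, x ≠ y → (r x y ∨ r y x)) ∧ (∀ x y, r x y → ¬ r y x) ∧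
    (∀ x, ¬ r x x) ∧ (∀ x y z, r x y → r y z → r x z)

/-- order from a rank function (lower rank = preferred) -/
def ord (f : Fin 3 → ℕ) : Fin 3 → Fin 3 → Prop := fun u v => f u < f v

lemma isPref_ord {f : Fin 3 → ℕ} (hf : Function.Injective f) : IsPref (ord f) :=
  ⟨fun x y h => Nat.lt_or_ge (f x) (f y) |>.imp id (fun h2 => lt_of_le_of_ne h2 (fun e => h (hf e.symm))),
   fun _ _ h => Nat.lt_asymm h, fun _ => Nat.lt_irrefl _, fun _ _ _ => Nat.lt_trans⟩

def rk (x y : Fin 3) (a b c : ℕ) : Fin 3 → ℕ := fun w => if w = x then a else if w = y then b else c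

lemma third_eq : ∀ x y u v : Fin 3, x ≠ y → u ≠ x → u ≠ y → v ≠ x → v ≠ y → u = v := by decide

lemma rk_inj {x y : Fin 3} (hxy : x ≠ y) {a b c : ℕ} (hab : a ≠ b) (hac : a ≠ c) (hbc : b ≠ c) :
    Function.Injective (rk x y a b c) := by
  intro u v h
  unfold rk at h
  split_ifs at h with h1 h2 h3 h4 h5 h6 h7 h8
  all_goals first
    | (subst_vars; rfl)
    | (exact absurd h (by assumption))
    | (exact absurd h.symm (by assumption))
    | (subst_vars; exact absurd rfl hxy)
    | (exact third_eq x y u v hxy (by assumption) (by assumption) (by assumption) (by assumption))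

section Arrow
variable {n : ℕ} {soc : (Fin n → Fin 3 → Fin 3 → Prop) → (Fin 3 → Fin 3 → Prop)}

def Decisive (soc : (Fin n → Fin 3 → Fin 3 → Prop) → (Fin 3 → Fin 3 → Prop))
    (S : Finset (Fin n)) (x y : Fin 3) : Prop :=
  ∀ π, (∀ i, IsPref (π i)) → (∀ i ∈ S, π i x y) → (∀ i ∉ S, π i y x) → soc π x y

variable
    (hunanim : ∀ π, (∀ i : Fin n, IsPref (π i)) → ∀ x y, (∀ i, π i x y) → soc π x y)
    (hIIA : ∀ π π', (∀ i : Fin n, IsPref (π i)) → (∀ i, IsPref (π' i)) →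
      ∀ x y, (∀ i, (π i x y ↔ π' i x y) ∧ (π i y x ↔ π' i y x)) →
        (soc π x y ↔ soc π' x y))
    (hrational : ∀ π, (∀ i : Fin n, IsPref (π i)) →
      ∀ x y z, soc π x y → soc π y z → soc π x z)

include hunanim hIIA hrational in
lemma expand1 {S : Finset (Fin n)} {a b c : Fin 3} (hab : a ≠ b) (hac : a ≠ c) (hbc : b ≠ c)
    (h : Decisive soc S a b) : Decisive soc S a c := by
  classical
  intro π hπ hS hout
  set f : Fin n → Fin 3 → ℕ := fun i =>
    rk a b (if i ∈ S then 0 else 2) (if i ∈ S then 1 else 0) (if i ∈ S then 2 else 1) with hf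
  have hπ₀ : ∀ i, IsPref (ord (f i)) := fun i =>
    isPref_ord (rk_inj hab (by by_cases hi : i ∈ S <;> simp [hi])
      (by by_cases hi : i ∈ S <;> simp [hi]) (by by_cases hi : i ∈ S <;> simp [hi]))
  have hfa : ∀ i, f i a = if i ∈ S then 0 else 2 := fun i => by simp [hf, rk]
  have hfb : ∀ i, f i b = if i ∈ S then 1 else 0 := fun i => by simp [hf, rk, hab.symm]
  have hfc : ∀ i, f i c = if i ∈ S then 2 else 1 := fun i => by simp [hf, rk, hac.symm, hbc.symm]
  have s1 : soc (fun i => ord (f i)) a b := by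
    apply h _ hπ₀
    · intro i hi; simp [ord, hfa, hfb, hi]
    · intro i hi; simp [ord, hfa, hfb, hi]
  have s2 : soc (fun i => ord (f i)) b c := by
    apply hunanim _ hπ₀
    intro i; by_cases hi : i ∈ S <;> simp [ord, hfb, hfc, hi]
  have s3 := hrational _ hπ₀ a b c s1 s2
  refine (hIIA _ π hπ₀ hπ a c fun i => ?_).mp s3
  by_cases hi : i ∈ S
  · exact ⟨by simp [ord, hfa, hfc, hi, hS i hi],
      by simp [ord, hfa, hfc, hi, (hπ i).2.1 _ _ (hS i hi)]⟩
  · exact ⟨by simp [ord, hfa, hfc, hi, (hπ i).2.1 _ _ (hout i hi)],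
      by simp [ord, hfa, hfc, hi, hout i hi]⟩

include hunanim hIIA hrational in
lemma expand2 {S : Finset (Fin n)} {a b c : Fin 3} (hab : a ≠ b) (hac : a ≠ c) (hbc : b ≠ c)
    (h : Decisive soc S a b) : Decisive soc S c b := by
  classical
  intro π hπ hS hout
  -- S : c > a > b   (c:0, a:1, b:2);  outside : b > c > a  (b:0, c:1, a:2)
  set f : Fin n → Fin 3 → ℕ := fun i =>
    rk a b (if i ∈ S then 1 else 2) (if i ∈ S then 2 else 0) (if i ∈ S then 0 else 1) with hf
  have hπ₀ : ∀ i, IsPref (ord (f i)) := fun i =>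
    isPref_ord (rk_inj hab (by by_cases hi : i ∈ S <;> simp [hi])
      (by by_cases hi : i ∈ S <;> simp [hi]) (by by_cases hi : i ∈ S <;> simp [hi]))
  have hfa : ∀ i, f i a = if i ∈ S then 1 else 2 := fun i => by simp [hf, rk]
  have hfb : ∀ i, f i b = if i ∈ S then 2 else 0 := fun i => by simp [hf, rk, hab.symm]
  have hfc : ∀ i, f i c = if i ∈ S then 0 else 1 := fun i => by simp [hf, rk, hac.symm, hbc.symm]
  have s1 : soc (fun i => ord (f i)) c a := by
    apply hunanim _ hπ₀
    intro i; by_cases hi : i ∈ S <;> simp [ord, hfa, hfc, hi]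
  have s2 : soc (fun i => ord (f i)) a b := by
    apply h _ hπ₀
    · intro i hi; simp [ord, hfa, hfb, hi]
    · intro i hi; simp [ord, hfa, hfb, hi]
  have s3 := hrational _ hπ₀ c a b s1 s2
  refine (hIIA _ π hπ₀ hπ c b fun i => ?_).mp s3
  by_cases hi : i ∈ S
  · exact ⟨by simp [ord, hfb, hfc, hi, hS i hi],
      by simp [ord, hfb, hfc, hi, (hπ i).2.1 _ _ (hS i hi)]⟩
  · exact ⟨by simp [ord, hfb, hfc, hi, (hπ i).2.1 _ _ (hout i hi)],
      by simp [ord, hfb, hfc, hi, hout i hi]⟩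

include hunanim hIIA hrational in
lemma expandAll {S : Finset (Fin n)} {a b : Fin 3} (hab : a ≠ b)
    (h : Decisive soc S a b) : ∀ x y : Fin 3, x ≠ y → Decisive soc S x y := by
  obtain ⟨t, hta, htb⟩ : ∃ t : Fin 3, t ≠ a ∧ t ≠ b := by
    have : ∀ a b : Fin 3, ∃ t : Fin 3, t ≠ a ∧ t ≠ b := by decide
    exact this a b
  have h1 : Decisive soc S a b := h
  have h2 : Decisive soc S a t := expand1 hunanim hIIA hrational hab hta.symm htb.symm h1
  have h3 : Decisive soc S t b := expand2 hunanim hIIA hrational hab hta.symm htb.symm h1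
  have h4 : Decisive soc S t a := expand1 hunanim hIIA hrational htb hta (Ne.symm hab) h3
  have h5 : Decisive soc S b a := expand2 hunanim hIIA hrational hta htb hab h4
  have h6 : Decisive soc S b t := expand1 hunanim hIIA hrational (Ne.symm hab) htb.symm hta.symm h5
  intro x y hxy
  have cov : ∀ w : Fin 3, w = a ∨ w = b ∨ w = t := by
    intro w
    by_contra hw
    push_neg at hw
    exact absurd (third_eq a b w t hab hw.1 hw.2.1 hta htb) hw.2.2
  rcases cov x with rfl | rfl | rfl <;> rcases cov y with rfl | rfl | rfl <;>
    first
      | exact absurd rfl hxy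
      | exact h1 | exact h2 | exact h3 | exact h4 | exact h5 | exact h6

include hIIA hrational in
lemma contract
    (hcomplete : ∀ π, (∀ i : Fin n, IsPref (π i)) →
      (∀ x y, x ≠ y → (soc π x y ↔ ¬ soc π y x)) ∧ (∀ x, ¬ soc π x x))
    {A B : Finset (Fin n)} (hAB : Disjoint A B)
    (h : ∀ x y : Fin 3, x ≠ y → Decisive soc (A ∪ B) x y) :
    Decisive soc A 0 2 ∨ Decisive soc B 1 0 := by
  classical
  -- A : 0 > 1 > 2 ; B : 1 > 2 > 0 ; outside : 2 > 0 > 1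
  set f : Fin n → Fin 3 → ℕ := fun i =>
    rk 0 1 (if i ∈ A then 0 else if i ∈ B then 2 else 1)
           (if i ∈ A then 1 else if i ∈ B then 0 else 2)
           (if i ∈ A then 2 else if i ∈ B then 1 else 0) with hf
  have hπ₀ : ∀ i, IsPref (ord (f i)) := fun i =>
    isPref_ord (rk_inj (by decide)
      (by by_cases h1 : i ∈ A <;> by_cases h2 : i ∈ B <;> simp [h1, h2])
      (by by_cases h1 : i ∈ A <;> by_cases h2 : i ∈ B <;> simp [h1, h2])
      (by by_cases h1 : i ∈ A <;> by_cases h2 : i ∈ B <;> simp [h1, h2]))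
  have hf0 : ∀ i, f i 0 = if i ∈ A then 0 else if i ∈ B then 2 else 1 := fun i => by simp [hf, rk]
  have hf1 : ∀ i, f i 1 = if i ∈ A then 1 else if i ∈ B then 0 else 2 := fun i => by
    simp [hf, rk, show (1 : Fin 3) ≠ 0 by decide]
  have hf2 : ∀ i, f i 2 = if i ∈ A then 2 else if i ∈ B then 1 else 0 := fun i => by
    simp [hf, rk, show (2 : Fin 3) ≠ 0 by decide, show (2 : Fin 3) ≠ 1 by decide]
  have s1 : soc (fun i => ord (f i)) 1 2 := by
    apply h 1 2 (by decide) _ hπ₀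
    · intro i hi
      rcases Finset.mem_union.mp hi with hiA | hiB
      · simp [ord, hf1, hf2, hiA]
      · have hiA : i ∉ A := Finset.disjoint_right.mp hAB hiB
        simp [ord, hf1, hf2, hiA, hiB]
    · intro i hi
      rw [Finset.mem_union] at hi
      push_neg at hi
      simp [ord, hf1, hf2, hi.1, hi.2]
  by_cases hc : soc (fun i => ord (f i)) 1 0
  · right
    intro π hπ hSB hout
    refine (hIIA _ π hπ₀ hπ 1 0 fun i => ?_).mp hc
    by_cases hiB : i ∈ B
    · have hiA : i ∉ A := Finset.disjoint_right.mp hAB hiB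
      exact ⟨by simp [ord, hf0, hf1, hiA, hiB, hSB i hiB],
        by simp [ord, hf0, hf1, hiA, hiB, (hπ i).2.1 _ _ (hSB i hiB)]⟩
    · by_cases hiA : i ∈ A
      · exact ⟨by simp [ord, hf0, hf1, hiA, (hπ i).2.1 _ _ (hout i hiB)],
          by simp [ord, hf0, hf1, hiA, hout i hiB]⟩
      · exact ⟨by simp [ord, hf0, hf1, hiA, hiB, (hπ i).2.1 _ _ (hout i hiB)],
          by simp [ord, hf0, hf1, hiA, hiB, hout i hiB]⟩
  · left
    have hc' : soc (fun i => ord (f i)) 0 1 :=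
      ((hcomplete _ hπ₀).1 0 1 (by decide)).mpr hc
    have s3 : soc (fun i => ord (f i)) 0 2 := hrational _ hπ₀ 0 1 2 hc' s1
    intro π hπ hSA hout
    refine (hIIA _ π hπ₀ hπ 0 2 fun i => ?_).mp s3
    by_cases hiA : i ∈ A
    · exact ⟨by simp [ord, hf0, hf2, hiA, hSA i hiA],
        by simp [ord, hf0, hf2, hiA, (hπ i).2.1 _ _ (hSA i hiA)]⟩
    · by_cases hiB : i ∈ B
      · exact ⟨by simp [ord, hf0, hf2, hiA, hiB, (hπ i).2.1 _ _ (hout i hiA)],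
          by simp [ord, hf0, hf2, hiA, hiB, hout i hiA]⟩
      · exact ⟨by simp [ord, hf0, hf2, hiA, hiB, (hπ i).2.1 _ _ (hout i hiA)],
          by simp [ord, hf0, hf2, hiA, hiB, hout i hiA]⟩

include hunanim hIIA hrational in
lemma dict_dir {i : Fin n}
    (hdec : ∀ x y : Fin 3, x ≠ y → Decisive soc ({i} : Finset (Fin n)) x y) :
    ∀ π, (∀ j, IsPref (π j)) → ∀ x y, x ≠ y → π i x y → soc π x y := by
  classical
  intro π hπ x y hxy hixy
  obtain ⟨z, hzx, hzy⟩ : ∃ z : Fin 3, z ≠ x ∧ z ≠ y := by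
    have : ∀ x y : Fin 3, ∃ z : Fin 3, z ≠ x ∧ z ≠ y := by decide
    exact this x y
  -- voter i : x > z > y ; voter j ≠ i : z on top, x vs y as in π j
  set f : Fin n → Fin 3 → ℕ := fun j => if j = i then rk x z 0 1 2
    else rk z x 0 (if π j x y then 1 else 2) (if π j x y then 2 else 1) with hf
  have hπ₀ : ∀ j, IsPref (ord (f j)) := by
    intro j
    apply isPref_ord
    by_cases hj : j = i
    · have : f j = rk x z 0 1 2 := funext fun w => by simp [hf, hj]
      rw [this]
      exact rk_inj hzx.symm (by simp) (by simp) (by simp)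
    · have : f j = rk z x 0 (if π j x y then 1 else 2) (if π j x y then 2 else 1) :=
        funext fun w => by simp [hf, hj]
      rw [this]
      exact rk_inj hzx (by by_cases hp : π j x y <;> simp [hp])
        (by by_cases hp : π j x y <;> simp [hp]) (by by_cases hp : π j x y <;> simp [hp])
  have hfix : f i x = 0 := by simp [hf, rk]
  have hfiz : f i z = 1 := by simp [hf, rk, hzx]
  have hfiy : f i y = 2 := by simp [hf, rk, hxy.symm, hzy.symm]
  have hfjx : ∀ j, j ≠ i → f j x = if π j x y then 1 else 2 := fun j hj => by
    simp [hf, rk, hj, hzx.symm]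
  have hfjz : ∀ j, j ≠ i → f j z = 0 := fun j hj => by simp [hf, rk, hj]
  have hfjy : ∀ j, j ≠ i → f j y = if π j x y then 2 else 1 := fun j hj => by
    simp [hf, rk, hj, hzy.symm, hxy.symm]
  have s1 : soc (fun j => ord (f j)) x z := by
    apply hdec x z hzx.symm _ hπ₀
    · intro j hj
      rw [Finset.mem_singleton] at hj
      subst hj
      simp [ord, hfix, hfiz]
    · intro j hj
      rw [Finset.mem_singleton] at hj
      by_cases hp : π j x y <;> simp [ord, hfjx j hj, hfjz j hj, hp]
  have s2 : soc (fun j => ord (f j)) z y := by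
    apply hunanim _ hπ₀
    intro j
    by_cases hj : j = i
    · subst hj; simp [ord, hfiz, hfiy]
    · by_cases hp : π j x y <;> simp [ord, hfjz j hj, hfjy j hj, hp]
  have s3 := hrational _ hπ₀ x z y s1 s2
  refine (hIIA _ π hπ₀ hπ x y fun j => ?_).mp s3
  by_cases hj : j = i
  · subst hj
    exact ⟨by simp [ord, hfix, hfiy, hixy], by simp [ord, hfix, hfiy, (hπ j).2.1 _ _ hixy]⟩
  · by_cases hp : π j x y
    · exact ⟨by simp [ord, hfjx j hj, hfjy j hj, hp],
        by simp [ord, hfjx j hj, hfjy j hj, hp, (hπ j).2.1 _ _ hp]⟩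
    · have hyx : π j y x := ((hπ j).1 x y hxy).resolve_left hp
      exact ⟨by simp [ord, hfjx j hj, hfjy j hj, hp],
        by simp [ord, hfjx j hj, hfjy j hj, hp, hyx]⟩

end Arrow

/-- Arrow's impossibility theorem for three alternatives: a social welfare
function on `n` voters satisfying unanimity, independence of irrelevant
alternatives, completeness/antisymmetry, and rationality (transitive output)
is a dictatorship. -/
theorem stmt_16 (n : ℕ) (hn : 1 ≤ n)
    (soc : (Fin n → Fin 3 → Fin 3 → Prop) → (Fin 3 → Fin 3 → Prop))
    -- the output is a complete antisymmetric relation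
    (hcomplete : ∀ π, (∀ i, IsPref (π i)) →
      (∀ x y, x ≠ y → (soc π x y ↔ ¬ soc π y x)) ∧ (∀ x, ¬ soc π x x))
    -- unanimity
    (hunanim : ∀ π, (∀ i, IsPref (π i)) →
      ∀ x y, (∀ i, π i x y) → soc π x y)
    -- independence of irrelevant alternatives
    (hIIA : ∀ π π', (∀ i, IsPref (π i)) → (∀ i, IsPref (π' i)) →
      ∀ x y, (∀ i, (π i x y ↔ π' i x y) ∧ (π i y x ↔ π' i y x)) →
        (soc π x y ↔ soc π' x y))
    -- rationality: the output is always acyclic, i.e. transitive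
    (hrational : ∀ π, (∀ i, IsPref (π i)) →
      ∀ x y z, soc π x y → soc π y z → soc π x z) :
    ∃ i : Fin n, ∀ π, (∀ j, IsPref (π j)) →
      ∀ x y, soc π x y ↔ π i x y := by
  classical
  have key : ∀ m (S : Finset (Fin n)), S.card ≤ m → S.Nonempty →
      (∀ x y : Fin 3, x ≠ y → Decisive soc S x y) →
      ∃ i : Fin n, ∀ x y : Fin 3, x ≠ y → Decisive soc ({i} : Finset (Fin n)) x y := by
    intro m
    induction m with
    | zero =>
      intro S hcard hne _
      exact absurd (Finset.card_pos.mpr hne) (by omega)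
    | succ m ih =>
      intro S hcard hne hdec
      obtain ⟨i, hi⟩ := hne
      by_cases hB : (S.erase i).Nonempty
      · have hsplit : ({i} : Finset (Fin n)) ∪ S.erase i = S := by
          rw [show ({i} : Finset (Fin n)) ∪ S.erase i = insert i (S.erase i) from rfl, Finset.insert_erase hi]
        have hdisj : Disjoint ({i} : Finset (Fin n)) (S.erase i) := by
          simp [Finset.disjoint_left]
        have hdec' : ∀ x y : Fin 3, x ≠ y →
            Decisive soc (({i} : Finset (Fin n)) ∪ S.erase i) x y := by
          rw [hsplit]; exact hdec
        rcases contract hIIA hrational hcomplete hdisj hdec' with h | h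
        · exact ⟨i, expandAll hunanim hIIA hrational (by decide) h⟩
        · refine ih (S.erase i) ?_ hB (expandAll hunanim hIIA hrational (by decide) h)
          have := Finset.card_erase_of_mem hi
          omega
      · have hS : S = {i} := by
          apply Finset.eq_singleton_iff_unique_mem.mpr
          refine ⟨hi, fun j hj => ?_⟩
          by_contra hji
          exact hB ⟨j, Finset.mem_erase.mpr ⟨hji, hj⟩⟩
        exact ⟨i, hS ▸ hdec⟩
  have huniv : ∀ x y : Fin 3, x ≠ y → Decisive soc (Finset.univ : Finset (Fin n)) x y :=
    fun x y _ π hπ hS _ => hunanim π hπ x y fun i => hS i (Finset.mem_univ i)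
  obtain ⟨i, hdec⟩ := key n Finset.univ (by simp) ⟨⟨0, hn⟩, Finset.mem_univ _⟩ huniv
  have main := dict_dir hunanim hIIA hrational hdec
  refine ⟨i, fun π hπ x y => ?_⟩
  by_cases hxy : x = y
  · subst hxy
    exact iff_of_false ((hcomplete π hπ).2 x) ((hπ i).2.2.1 x)
  · constructor
    · intro hs
      by_contra hnot
      have hyx : π i y x := ((hπ i).1 x y hxy).resolve_left hnot
      have : soc π y x := main π hπ y x (Ne.symm hxy) hyx
      exact ((hcomplete π hπ).1 x y hxy).mp hs this
    · exact main π hπ x y hxy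
end
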